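/- For every irrational α, the best constant of Diophantine approximation satisfies ℓ(α) = limsup_{n→∞} (αₙ + βₙ), where αₙ are the complete quotients of α and βₙ = qₙ₋₂/qₙ₋₁ (limits taken in [0, ∞]). -/

import Mathlib

/-- The complete quotients of `α`: `α₀ = α` and `αₙ₊₁ = 1/(αₙ - ⌊αₙ⌋)`. -/
noncomputable def cq (α : ℝ) : ℕ → ℝ
  | 0 => α
  | n + 1 => 1 / (cq α n - ⌊cq α n⌋)

/-- The partial quotients of the continued fraction expansion of `α`. -/
noncomputable def cfA (α : ℝ) (n : ℕ) : ℤ := ⌊cq α n⌋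

/-- The numerators `pₙ` of the convergents of `α`:
`p₀ = a₀`, `p₁ = a₁a₀ + 1`, `pₙ₊₂ = aₙ₊₂pₙ₊₁ + pₙ` (equivalently `p₋₁ = 1`, `p₋₂ = 0`). -/
noncomputable def cfP (α : ℝ) : ℕ → ℤ
  | 0 => cfA α 0
  | 1 => cfA α 1 * cfA α 0 + 1
  | n + 2 => cfA α (n + 2) * cfP α (n + 1) + cfP α n

/-- The denominators `qₙ` of the convergents of `α`:
`q₀ = 1`, `q₁ = a₁`, `qₙ₊₂ = aₙ₊₂qₙ₊₁ + qₙ` (equivalently `q₋₁ = 0`, `q₋₂ = 1`). -/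
noncomputable def cfQ (α : ℝ) : ℕ → ℤ
  | 0 => 1
  | 1 => cfA α 1
  | n + 2 => cfA α (n + 2) * cfQ α (n + 1) + cfQ α n

/-- The best constant of Diophantine approximation of `α`:
`ℓ(α) = limsup_{n→∞} 1/|qₙ(qₙα - pₙ)|`, valued in `[0, ∞]`. -/
noncomputable def ell (α : ℝ) : ENNReal :=
  Filter.atTop.limsup fun n : ℕ =>
    ENNReal.ofReal (1 / |(cfQ α n : ℝ) * ((cfQ α n : ℝ) * α - (cfP α n : ℝ))|)

/-- The Lagrange spectrum: the set of finite values `ℓ(α)` over irrational `α`. -/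
noncomputable def LagrangeSpectrum : Set ℝ :=
  {x | ∃ α : ℝ, Irrational α ∧ ell α ≠ ⊤ ∧ x = (ell α).toReal}

/-- The Markov spectrum: the set of values `√(b² - 4ac) / inf |ax² + bxy + cy²|`, the infimum
being over `(x,y) ∈ ℤ² - {(0,0)}`, for indefinite binary quadratic forms with positive
discriminant (and positive infimum, so that the value is finite). -/
noncomputable def MarkovSpectrum : Set ℝ :=
  {x | ∃ a b c : ℝ, 0 < b ^ 2 - 4 * a * c ∧
    0 < sInf {v : ℝ | ∃ p q : ℤ, ¬(p = 0 ∧ q = 0) ∧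
        v = |a * (p : ℝ) ^ 2 + b * (p : ℝ) * (q : ℝ) + c * (q : ℝ) ^ 2|} ∧
    x = Real.sqrt (b ^ 2 - 4 * a * c) /
      sInf {v : ℝ | ∃ p q : ℤ, ¬(p = 0 ∧ q = 0) ∧
        v = |a * (p : ℝ) ^ 2 + b * (p : ℝ) * (q : ℝ) + c * (q : ℝ) ^ 2|}}


/-!
Writing `α` as the Möbius image `α = (pₙ αₙ₊₁ + pₙ₋₁) / (qₙ αₙ₊₁ + qₙ₋₁)` of its complete
quotient and using `pₙ qₙ₋₁ - pₙ₋₁ qₙ = ±1`, one gets the exact error formula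
`qₙ α - pₙ = ±1 / (qₙ αₙ₊₁ + qₙ₋₁)`. Hence `1 / |qₙ (qₙ α - pₙ)| = αₙ₊₁ + qₙ₋₁ / qₙ` for every
`n`, and the two limsups agree term by term.
-/

/-- `cfPShift α n = pₙ₋₂`, with the conventions `p₋₂ = 0`, `p₋₁ = 1`. -/
noncomputable def cfPShift (α : ℝ) : ℕ → ℤ
  | 0 => 0
  | 1 => 1
  | n + 2 => cfP α n

/-- `cfQShift α n = qₙ₋₂`, with the conventions `q₋₂ = 1`, `q₋₁ = 0`. -/
noncomputable def cfQShift (α : ℝ) : ℕ → ℤ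
  | 0 => 1
  | 1 => 0
  | n + 2 => cfQ α n

section Recurrences

variable (α : ℝ)

lemma cfPShift_add_two (n : ℕ) :
    cfPShift α (n + 2) = cfA α n * cfPShift α (n + 1) + cfPShift α n := by
  match n with
  | 0 => simp [cfPShift, cfP]
  | 1 => simp [cfPShift, cfP]
  | n + 2 => simp [cfPShift, cfP]

lemma cfQShift_add_two (n : ℕ) :
    cfQShift α (n + 2) = cfA α n * cfQShift α (n + 1) + cfQShift α n := by
  match n with
  | 0 => simp [cfQShift, cfQ]
  | 1 => simp [cfQShift, cfQ]
  | n + 2 => simp [cfQShift, cfQ]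

lemma cfQShift_succ (n : ℕ) :
    cfQShift α (n + 1) = if n = 0 then 0 else cfQ α (n - 1) := by
  cases n <;> rfl

lemma cfPShift_mul_cfQShift_sub (n : ℕ) :
    cfPShift α (n + 1) * cfQShift α n - cfPShift α n * cfQShift α (n + 1) = (-1) ^ n := by
  induction n with
  | zero => simp [cfPShift, cfQShift]
  | succ n ih =>
    rw [cfPShift_add_two, cfQShift_add_two, pow_succ]
    linear_combination -ih

lemma cq_eq_cfA_add_inv (n : ℕ) : cq α n = cfA α n + (cq α (n + 1))⁻¹ := by
  rw [cq, one_div, inv_inv, cfA]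
  ring

end Recurrences

section CompleteQuotients

variable {α : ℝ} (hα : Irrational α)
include hα

lemma irrational_cq : ∀ n, Irrational (cq α n)
  | 0 => hα
  | n + 1 => by
    rw [cq, one_div, Int.self_sub_floor]
    exact ((irrational_cq n).sub_intCast _).inv

lemma one_lt_cq_succ (n : ℕ) : 1 < cq α (n + 1) := by
  have hfract_pos : 0 < Int.fract (cq α n) :=
    Int.fract_pos.mpr fun h => (irrational_cq hα n).ne_int _ h
  rw [cq, Int.self_sub_floor, one_div, one_lt_inv₀ hfract_pos]
  exact Int.fract_lt_one _

lemma one_le_cfA_succ (n : ℕ) : 1 ≤ cfA α (n + 1) :=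
  Int.le_floor.mpr (by exact_mod_cast (one_lt_cq_succ hα n).le)

lemma one_le_cfQ (n : ℕ) : 1 ≤ cfQ α n := by
  suffices h : ∀ n, 1 ≤ cfQ α n ∧ 1 ≤ cfQ α (n + 1) from (h n).1
  intro n
  induction n with
  | zero => exact ⟨le_rfl, one_le_cfA_succ hα 0⟩
  | succ n ih =>
    refine ⟨ih.2, ?_⟩
    show 1 ≤ cfA α (n + 2) * cfQ α (n + 1) + cfQ α n
    nlinarith [one_le_cfA_succ hα (n + 1), ih.1, ih.2]

lemma cfQShift_nonneg : ∀ n, 0 ≤ cfQShift α n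
  | 0 => zero_le_one
  | 1 => le_rfl
  | n + 2 => zero_le_one.trans (one_le_cfQ hα n)

lemma cfPShift_mul_cq_add_eq (n : ℕ) :
    (cfPShift α (n + 1) : ℝ) * cq α n + cfPShift α n =
      α * ((cfQShift α (n + 1) : ℝ) * cq α n + cfQShift α n) := by
  induction n with
  | zero => simp [cfPShift, cfQShift, cq]
  | succ n ih =>
    have hcq : cq α n * cq α (n + 1) = cfA α n * cq α (n + 1) + 1 := by
      rw [cq_eq_cfA_add_inv α n]
      field_simp [(zero_lt_one.trans (one_lt_cq_succ hα n)).ne']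
    rw [cfPShift_add_two, cfQShift_add_two]
    push_cast
    linear_combination cq α (n + 1) * ih +
      (α * (cfQShift α (n + 1) : ℝ) - cfPShift α (n + 1)) * hcq

lemma cfQ_mul_cq_add_cfQShift_pos (n : ℕ) :
    0 < (cfQ α n : ℝ) * cq α (n + 1) + cfQShift α (n + 1) := by
  have hq : (1 : ℝ) ≤ cfQ α n := by exact_mod_cast one_le_cfQ hα n
  have hq' : (0 : ℝ) ≤ cfQShift α (n + 1) := by exact_mod_cast cfQShift_nonneg hα (n + 1)
  nlinarith [one_lt_cq_succ hα n]

lemma cfQ_mul_sub_cfP (n : ℕ) :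
    (cfQ α n : ℝ) * α - cfP α n =
      (-1) ^ n / ((cfQ α n : ℝ) * cq α (n + 1) + cfQShift α (n + 1)) := by
  have hmob := cfPShift_mul_cq_add_eq hα (n + 1)
  have hdet : ((cfP α n * cfQShift α (n + 1) - cfPShift α (n + 1) * cfQ α n : ℤ) : ℝ) =
      (-1) ^ (n + 1) := by
    exact_mod_cast cfPShift_mul_cfQShift_sub α (n + 1)
  change (cfP α n : ℝ) * cq α (n + 1) + cfPShift α (n + 1) =
    α * ((cfQ α n : ℝ) * cq α (n + 1) + cfQShift α (n + 1)) at hmob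
  rw [eq_div_iff (cfQ_mul_cq_add_cfQShift_pos hα n).ne']
  push_cast at hdet
  linear_combination -(cfQ α n : ℝ) * hmob - hdet

lemma one_div_abs_cfQ_mul_sub_cfP (n : ℕ) :
    1 / |(cfQ α n : ℝ) * ((cfQ α n : ℝ) * α - cfP α n)| =
      cq α (n + 1) + (cfQShift α (n + 1) : ℝ) / cfQ α n := by
  have hq : (0 : ℝ) < cfQ α n := by exact_mod_cast one_le_cfQ hα n
  rw [cfQ_mul_sub_cfP hα, abs_mul, abs_div, abs_pow, abs_neg, abs_one, one_pow,
    abs_of_pos hq, abs_of_pos (cfQ_mul_cq_add_cfQShift_pos hα n)]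
  field_simp

end CompleteQuotients

/-- **Perron's characterization of `ℓ(α)`.** For every irrational `α`,
`ℓ(α) = limsup_{n→∞} (αₙ + βₙ)` where `αₙ` are the complete quotients of `α` and
`βₙ = qₙ₋₂/qₙ₋₁` (i.e. `βₙ₊₁ = qₙ₋₁/qₙ`, with `q₋₁ = 0`); limits taken in `[0,∞]`. -/
theorem ell_eq_limsup_cq_add_beta (α : ℝ) (hα : Irrational α) :
    ell α = Filter.atTop.limsup (fun n : ℕ =>
      ENNReal.ofReal (cq α (n + 1) +
        (if n = 0 then (0 : ℝ) else (cfQ α (n - 1) : ℝ)) / (cfQ α n : ℝ))) := by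
  rw [ell]
  congr 1
  funext n
  congr 1
  rw [one_div_abs_cfQ_mul_sub_cfP hα, cfQShift_succ]
  split_ifs <;> simp
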